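/- arXiv:1612.07620 — 6 statements merged into one kernel-verified Lean document; each statement's English description precedes it below -/
import Mathlib

section
/- Let γ^{(1)}, …, γ^{(ℓ)} be Chern characters with r^{(i)} > 0 for all i, and set γ = Σᵢ γ^{(i)} and r = Σᵢ r^{(i)}. Then r·Δ(γ) = Σ_{i=1}^{ℓ} r^{(i)}·Δ(γ^{(i)}) − Σ_{i=2}^{ℓ} (1/(2 r^{(i)})) · (1/((Σ_{j=1}^{i} r^{(j)})·(Σ_{k=1}^{i−1} r^{(k)}))) · (ξᵢ · ξᵢ), where ξᵢ = Σ_{j=1}^{i−1} (r^{(i)} γ₁^{(j)} − r^{(j)} γ₁^{(i)}). -/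
/-!
Since `r·Δ(γ) = γ₁·γ₁/(2r) − γ₂` and `γ₂` is additive, only the quadratic part
`q(r, c) = c·c/(2r)` matters. Adding a part `(r, c)` to the partial sum `(R, C)` of the parts
before it changes `q` by `q(r, c) − (rC − Rc)·(rC − Rc)/(2r·(R + r)·R)`, and `rC − Rc` is exactly
`ξᵢ`; summing these increments over `i` telescopes to `q` of the total.
-/

/-- The discriminant `Δ(γ) = (γ₁·γ₁)/(2r²) − γ₂/r`. -/
def disc {V : Type*} [AddCommGroup V] [Module ℚ V]
    (B : V →ₗ[ℚ] V →ₗ[ℚ] ℚ) (γ : ℚ × V × ℚ) : ℚ :=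
  B γ.2.1 γ.2.1 / (2 * γ.1 ^ 2) - γ.2.2 / γ.1

open Finset

theorem Fin.sum_Iic_sub_Iio {M : Type*} [AddCommGroup M] {n : ℕ} (g : Finset (Fin n) → M) :
    ∑ i, (g (Iic i) - g (Iio i)) = g univ - g ∅ := by
  let F : ℕ → M := fun k => g (univ.filter (fun j : Fin n => (j : ℕ) < k))
  have hIic (i : Fin n) : Iic i = univ.filter (fun j : Fin n => (j : ℕ) < i + 1) := by
    ext; simp
  have hIio (i : Fin n) : Iio i = univ.filter (fun j : Fin n => (j : ℕ) < i) := by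
    ext; simp
  calc ∑ i, (g (Iic i) - g (Iio i)) = ∑ i : Fin n, (F (i + 1) - F i) := by
        simp only [hIic, hIio, F]
    _ = F n - F 0 := by rw [Fin.sum_univ_eq_sum_range (fun k => F (k + 1) - F k), sum_range_sub]
    _ = g univ - g ∅ := by simp [F]

section

variable {V : Type*} [AddCommGroup V] [Module ℚ V] (B : V →ₗ[ℚ] V →ₗ[ℚ] ℚ)

def quadOverRank (γ : ℚ × V × ℚ) : ℚ := B γ.2.1 γ.2.1 / (2 * γ.1)

@[simp] lemma quadOverRank_zero : quadOverRank B 0 = 0 := by simp [quadOverRank]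

lemma rank_mul_disc {γ : ℚ × V × ℚ} (hγ : γ.1 ≠ 0) :
    γ.1 * disc B γ = quadOverRank B γ - γ.2.2 := by
  rw [disc, quadOverRank]
  field_simp

lemma quadOverRank_add (hB : ∀ a b, B a b = B b a) {x y : ℚ × V × ℚ}
    (hx : x.1 ≠ 0) (hy : y.1 ≠ 0) (hxy : x.1 + y.1 ≠ 0) :
    quadOverRank B (x + y) = quadOverRank B x + quadOverRank B y
      - 1 / (2 * y.1) * (1 / ((x.1 + y.1) * x.1))
        * B (y.1 • x.2.1 - x.1 • y.2.1) (y.1 • x.2.1 - x.1 • y.2.1) := by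
  simp only [quadOverRank, Prod.fst_add, Prod.snd_add, map_add, map_sub, map_smul,
    LinearMap.add_apply, LinearMap.sub_apply, LinearMap.smul_apply, smul_eq_mul, hB y.2.1 x.2.1]
  field_simp
  ring

variable {ι : Type*} [LinearOrder ι] [LocallyFiniteOrderBot ι]

def discCorrection (γ : ι → ℚ × V × ℚ) (i : ι) : ℚ :=
  (1 / (2 * (γ i).1))
    * (1 / ((∑ j ∈ Iic i, (γ j).1) * (∑ j ∈ Iio i, (γ j).1)))
    * B (∑ j ∈ Iio i, ((γ i).1 • (γ j).2.1 - (γ j).1 • (γ i).2.1))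
        (∑ j ∈ Iio i, ((γ i).1 • (γ j).2.1 - (γ j).1 • (γ i).2.1))

lemma quadOverRank_sum_Iic (hB : ∀ a b, B a b = B b a) (γ : ι → ℚ × V × ℚ)
    (hr : ∀ i, 0 < (γ i).1) (i : ι) :
    quadOverRank B (∑ j ∈ Iic i, γ j)
      = quadOverRank B (∑ j ∈ Iio i, γ j) + quadOverRank B (γ i) - discCorrection B γ i := by
  rcases (Iio i).eq_empty_or_nonempty with h | h
  · simp [discCorrection, Iic_eq_cons_Iio, h]
  have hS : 0 < (∑ j ∈ Iio i, γ j).1 := by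
    rw [Prod.fst_sum]; exact sum_pos (fun j _ => hr j) h
  have hξ : ∑ j ∈ Iio i, ((γ i).1 • (γ j).2.1 - (γ j).1 • (γ i).2.1)
      = (γ i).1 • (∑ j ∈ Iio i, γ j).2.1 - (∑ j ∈ Iio i, γ j).1 • (γ i).2.1 := by
    simp only [sum_sub_distrib, smul_sum, sum_smul, Prod.fst_sum, Prod.snd_sum]
  rw [discCorrection, hξ, Iic_eq_cons_Iio, sum_cons, sum_cons, add_comm (γ i), add_comm (γ i).1,
    ← Prod.fst_sum, quadOverRank_add B hB hS.ne' (hr i).ne' (add_pos hS (hr i)).ne']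

end

/-- Let `γ^{(1)}, …, γ^{(ℓ)}` be Chern characters with `r^{(i)} > 0` for all `i`, and set
`γ = Σᵢ γ^{(i)}` and `r = Σᵢ r^{(i)}`.  Then
`r·Δ(γ) = Σᵢ r^{(i)}·Δ(γ^{(i)}) − Σ_{i=2}^{ℓ} (1/(2r^{(i)}))·(1/((Σ_{j≤i} r^{(j)})(Σ_{k<i} r^{(k)})))·(ξᵢ·ξᵢ)`
where `ξᵢ = Σ_{j<i} (r^{(i)} γ₁^{(j)} − r^{(j)} γ₁^{(i)})`.
(Here the parts are indexed by `Fin (ℓ+1)`, so that there is at least one part, and the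
paper's index `i ∈ {2, …, ℓ}` corresponds to `0 < i`.) -/
theorem stmt4 {V : Type*} [AddCommGroup V] [Module ℚ V]
    (B : V →ₗ[ℚ] V →ₗ[ℚ] ℚ) (hB : ∀ a b, B a b = B b a)
    (ℓ : ℕ) (γ : Fin (ℓ + 1) → ℚ × V × ℚ) (hr : ∀ i, 0 < (γ i).1) :
    (∑ i, γ i).1 * disc B (∑ i, γ i)
      = (∑ i, (γ i).1 * disc B (γ i))
        - ∑ i ∈ Finset.univ.filter (fun i : Fin (ℓ + 1) => 0 < i),
            (1 / (2 * (γ i).1))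
              * (1 / ((∑ j ∈ Finset.Iic i, (γ j).1) * (∑ j ∈ Finset.Iio i, (γ j).1)))
              * B (∑ j ∈ Finset.Iio i, ((γ i).1 • (γ j).2.1 - (γ j).1 • (γ i).2.1))
                  (∑ j ∈ Finset.Iio i, ((γ i).1 • (γ j).2.1 - (γ j).1 • (γ i).2.1)) := by
  have hcorr : ∑ i ∈ univ.filter (fun i : Fin (ℓ + 1) => 0 < i), discCorrection B γ i
      = ∑ i, discCorrection B γ i := by
    refine sum_filter_of_ne fun i _ hi => Fin.pos_iff_ne_zero.mpr ?_
    rintro rfl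
    simp [discCorrection, Iio_eq_empty.mpr fun j _ => Fin.zero_le j] at hi
  have hrank : (∑ i, γ i).1 ≠ 0 := by
    rw [Prod.fst_sum]; exact (sum_pos (fun i _ => hr i) univ_nonempty).ne'
  calc (∑ i, γ i).1 * disc B (∑ i, γ i)
      = quadOverRank B (∑ i, γ i) - ∑ i, (γ i).2.2 := by
        rw [rank_mul_disc B hrank, Prod.snd_sum, Prod.snd_sum]
    _ = ∑ i, (quadOverRank B (∑ j ∈ Iic i, γ j) - quadOverRank B (∑ j ∈ Iio i, γ j))
          - ∑ i, (γ i).2.2 := by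
        rw [Fin.sum_Iic_sub_Iio (fun s => quadOverRank B (∑ j ∈ s, γ j))]; simp
    _ = ∑ i, (quadOverRank B (γ i) - (γ i).2.2) - ∑ i, discCorrection B γ i := by
        simp only [quadOverRank_sum_Iic B hB γ hr, sum_sub_distrib, sum_add_distrib]; ring
    _ = _ := by
        rw [← hcorr]
        simp only [rank_mul_disc B (hr _).ne', discCorrection]
end

section
/- Let γ^{(1)}, γ^{(2)} be Chern characters with r^{(1)} > 0, r^{(2)} > 0, Δ(γ^{(1)}) ≥ 0 and Δ(γ^{(2)}) ≥ 0 (the Bogomolov inequality for the two subquotients). Set γ = γ^{(1)} + γ^{(2)}, r = r^{(1)} + r^{(2)}, and ξ = r^{(1)} γ₁^{(2)} − r^{(2)} γ₁^{(1)}. Then ξ·ξ ≥ −2 r² r^{(1)} r^{(2)} Δ(γ); if moreover Δ(γ) ≥ 0, then ξ·ξ ≥ −(r⁴/2)·Δ(γ). -/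
/-- Let `γ^{(1)} = (r₁, γ₁, γ₂)`, `γ^{(2)} = (r₂, γ₁', γ₂')` be Chern characters with
`r₁, r₂ > 0` and `Δ(γ^{(1)}) ≥ 0`, `Δ(γ^{(2)}) ≥ 0` (Bogomolov).  Set `γ = γ^{(1)} + γ^{(2)}`,
`r = r₁ + r₂` and `ξ = r₁γ₁^{(2)} − r₂γ₁^{(1)}`.  Then `ξ·ξ ≥ −2r²r₁r₂Δ(γ)`; if moreover
`Δ(γ) ≥ 0`, then `ξ·ξ ≥ −(r⁴/2)·Δ(γ)`. -/
theorem stmt5 {V : Type*} [AddCommGroup V] [Module ℚ V]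
    (B : V →ₗ[ℚ] V →ₗ[ℚ] ℚ) (hB : ∀ a b, B a b = B b a)
    (r₁ r₂ : ℚ) (γ₁ γ₁' : V) (γ₂ γ₂' : ℚ)
    (h₁ : 0 < r₁) (h₂ : 0 < r₂)
    (hΔ₁ : 0 ≤ disc B (r₁, γ₁, γ₂)) (hΔ₂ : 0 ≤ disc B (r₂, γ₁', γ₂')) :
    -2 * (r₁ + r₂) ^ 2 * r₁ * r₂ * disc B (r₁ + r₂, γ₁ + γ₁', γ₂ + γ₂')
        ≤ B (r₁ • γ₁' - r₂ • γ₁) (r₁ • γ₁' - r₂ • γ₁) ∧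
      (0 ≤ disc B (r₁ + r₂, γ₁ + γ₁', γ₂ + γ₂') →
        -((r₁ + r₂) ^ 4 / 2) * disc B (r₁ + r₂, γ₁ + γ₁', γ₂ + γ₂')
          ≤ B (r₁ • γ₁' - r₂ • γ₁) (r₁ • γ₁' - r₂ • γ₁)) := by
  have hr : (0:ℚ) < r₁ + r₂ := by linarith
  have hξ : B (r₁ • γ₁' - r₂ • γ₁) (r₁ • γ₁' - r₂ • γ₁)
      = r₁ ^ 2 * B γ₁' γ₁' - 2 * r₁ * r₂ * B γ₁ γ₁' + r₂ ^ 2 * B γ₁ γ₁ := by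
    simp only [map_sub, map_smul, LinearMap.sub_apply, LinearMap.smul_apply,
      smul_eq_mul, hB γ₁' γ₁]
    ring
  have hE : B (γ₁ + γ₁') (γ₁ + γ₁')
      = B γ₁ γ₁ + 2 * B γ₁ γ₁' + B γ₁' γ₁' := by
    simp only [map_add, LinearMap.add_apply, hB γ₁' γ₁]
    ring
  simp only [disc] at hΔ₁ hΔ₂ ⊢
  rw [hξ, hE]
  rw [div_sub_div _ _ (by positivity) h₁.ne', le_div_iff₀ (by positivity)] at hΔ₁
  rw [div_sub_div _ _ (by positivity) h₂.ne', le_div_iff₀ (by positivity)] at hΔ₂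
  have key : -2 * (r₁ + r₂) ^ 2 * r₁ * r₂ *
      ((B γ₁ γ₁ + 2 * B γ₁ γ₁' + B γ₁' γ₁') / (2 * (r₁ + r₂) ^ 2)
        - (γ₂ + γ₂') / (r₁ + r₂))
      ≤ r₁ ^ 2 * B γ₁' γ₁' - 2 * r₁ * r₂ * B γ₁ γ₁' + r₂ ^ 2 * B γ₁ γ₁ := by
    rw [div_sub_div _ _ (by positivity) hr.ne', ← mul_div_assoc,
      div_le_iff₀ (by positivity), ← sub_nonneg]
    have ha : 0 ≤ B γ₁ γ₁ - 2 * r₁ * γ₂ := by nlinarith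
    have hc : 0 ≤ B γ₁' γ₁' - 2 * r₂ * γ₂' := by nlinarith
    nlinarith [mul_nonneg (by positivity : (0:ℚ) ≤ 2 * r₂ * (r₁ + r₂) ^ 4) ha,
      mul_nonneg (by positivity : (0:ℚ) ≤ 2 * r₁ * (r₁ + r₂) ^ 4) hc]
  refine ⟨key, fun hΔ => le_trans ?_ key⟩
  have h4 : r₁ * r₂ ≤ (r₁ + r₂) ^ 2 / 4 := by nlinarith [sq_nonneg (r₁ - r₂)]
  have hΔ' : 0 ≤ (B γ₁ γ₁ + 2 * B γ₁ γ₁' + B γ₁' γ₁') / (2 * (r₁ + r₂) ^ 2)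
      - (γ₂ + γ₂') / (r₁ + r₂) := by
    simpa [hE] using hΔ
  nlinarith [mul_nonneg (mul_nonneg (sq_nonneg (r₁ - r₂)) (sq_nonneg (r₁ + r₂))) hΔ']
end

section
/- Log and Exp are mutually inverse: for every f ∈ z·R⟦z⟧ one has Log(Exp(f)) = f, and for every h ∈ 1 + z·R⟦z⟧ one has Exp(Log(h)) = h. In particular, Exp is a bijection from z·R⟦z⟧ onto 1 + z·R⟦z⟧. -/
open PowerSeries

/-- The formal exponential `exp(f) = Σ_{m≥0} f^m/m!` of a power series (intended for `f` with
zero constant term, in which case `coeff k (f^m) = 0` for `m > k` and the defining sum is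
finite). -/
noncomputable def pexp {R : Type*} [CommRing R] [Algebra ℚ R] (f : PowerSeries R) :
    PowerSeries R :=
  PowerSeries.mk fun k => ∑ m ∈ Finset.range (k + 1),
    ((m.factorial : ℚ))⁻¹ • (PowerSeries.coeff k (f ^ m))

/-- The formal logarithm `log(h) = Σ_{m≥1} (−1)^{m+1}(h−1)^m/m` of a power series (intended
for `h` with constant term `1`). -/
noncomputable def plog {R : Type*} [CommRing R] [Algebra ℚ R] (h : PowerSeries R) :
    PowerSeries R :=
  PowerSeries.mk fun k => ∑ m ∈ Finset.Icc 1 k,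
    (((-1 : ℚ) ^ (m + 1)) / m) • (PowerSeries.coeff k ((h - 1) ^ m))

/-- The extension of the Adams operation `ψₙ` to `R⟦z⟧`:
`ψₙ(Σₖ aₖ zᵏ) = Σₖ ψₙ(aₖ) z^{nk}`. -/
noncomputable def adams {R : Type*} [CommRing R] [Algebra ℚ R]
    (ψ : ℕ → R →ₐ[ℚ] R) (n : ℕ) (f : PowerSeries R) : PowerSeries R :=
  PowerSeries.mk fun k => if n ∣ k then ψ n (PowerSeries.coeff (k / n) f) else 0

/-- The plethystic exponential `Exp(f) = exp(Σ_{n≥1} ψₙ(f)/n)` (for `f ∈ z·R⟦z⟧`). -/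
noncomputable def PExp {R : Type*} [CommRing R] [Algebra ℚ R]
    (ψ : ℕ → R →ₐ[ℚ] R) (f : PowerSeries R) : PowerSeries R :=
  pexp (PowerSeries.mk fun k =>
    ∑ n ∈ k.divisors, ((n : ℚ))⁻¹ • PowerSeries.coeff k (adams ψ n f))

/-- The plethystic logarithm `Log(h) = Σ_{n≥1} (μ(n)/n)·ψₙ(log h)` (for `h ∈ 1 + z·R⟦z⟧`). -/
noncomputable def PLog {R : Type*} [CommRing R] [Algebra ℚ R]
    (ψ : ℕ → R →ₐ[ℚ] R) (h : PowerSeries R) : PowerSeries R :=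
  PowerSeries.mk fun k => ∑ n ∈ k.divisors,
    (((ArithmeticFunction.moebius n : ℤ) : ℚ) / n) • PowerSeries.coeff k (adams ψ n (plog h))

/-!
Write `A_a v = Σₙ a(n) ψₙ(v)` for an arithmetic function `a`. Then `Exp = exp ∘ A_{1/n}` and
`Log = A_{μ(n)/n} ∘ log`. Because `ψₘ ∘ ψₙ = ψₘₙ`, the operators compose by Dirichlet convolution,
`A_a ∘ A_b = A_{a * b}`, and `(μ(n)/n) * (1/n) = (μ * ζ)(n)/n = δ(n)`, so `A_{μ(n)/n}` and `A_{1/n}`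
are mutually inverse on `z·R⟦z⟧`. What is left is that the ordinary `exp` and `log` are mutually
inverse, which follows from the chain rule: `exp(f)' = f' exp(f)` and `h · log(h)' = h'`, so
`log(exp f)` and `f` have the same derivative, while `exp(log h)` and `h` solve the same linear ODE
`y' = log(h)' y` with `y(0) = 1`.
-/

namespace PowerSeries

variable {R : Type*} [CommRing R]

theorem coeff_pow_of_lt {g : R⟦X⟧} (hg : constantCoeff g = 0) {k m : ℕ} (hkm : k < m) :
    coeff k (g ^ m) = 0 :=
  coeff_of_lt_order k <| (Nat.cast_lt.mpr hkm).trans_le (le_order_pow_of_constantCoeff_eq_zero m hg)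

theorem coeff_subst_eq_sum_range {g : R⟦X⟧} (hg : constantCoeff g = 0) (a : R⟦X⟧) (k : ℕ) :
    coeff k (a.subst g) = ∑ m ∈ Finset.range (k + 1), coeff m a • coeff k (g ^ m) := by
  rw [coeff_subst' (HasSubst.of_constantCoeff_zero' hg)]
  refine finsum_eq_sum_of_support_subset _ fun m hm => ?_
  by_contra hmk
  rw [Finset.coe_range, Set.mem_Iio, not_lt] at hmk
  exact hm (by simp only [coeff_pow_of_lt hg (Nat.lt_of_succ_le hmk), smul_zero])

theorem eq_of_derivative_eq_mul [IsAddTorsionFree R] {a y z : R⟦X⟧}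
    (hy : d⁄dX R y = a * y) (hz : d⁄dX R z = a * z) (hc : constantCoeff y = constantCoeff z) :
    y = z := by
  set w := y - z
  have hw : d⁄dX R w = a * w := by rw [map_sub, hy, hz, mul_sub]
  suffices ∀ n, coeff n w = 0 from sub_eq_zero.mp (ext this)
  intro n
  induction n using Nat.strong_induction_on with
  | _ n ih =>
    rcases n with _ | n
    · simp [w, hc]
    · have h := congrArg (coeff n) hw
      rw [coeff_derivative, coeff_mul, Finset.sum_eq_zero fun p hp => by
        rw [ih p.2 (Finset.Nat.antidiagonal.snd_lt hp), mul_zero]] at h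
      rw [← Nat.cast_succ, mul_comm, ← nsmul_eq_mul] at h
      exact (smul_eq_zero.mp h).resolve_left n.succ_ne_zero

end PowerSeries

section ExpLog

open PowerSeries

variable {R : Type*} [CommRing R] [Algebra ℚ R]

theorem pexp_eq_subst {f : R⟦X⟧} (hf : constantCoeff f = 0) : pexp f = (exp R).subst f := by
  ext k
  rw [pexp, coeff_mk, coeff_subst_eq_sum_range hf]
  simp only [coeff_exp, algebraMap_smul, one_div]

theorem plog_eq_logOf {h : R⟦X⟧} (hh : constantCoeff h = 1) : plog h = logOf h := by
  have hh1 : constantCoeff (h - 1) = 0 := by rw [map_sub, hh, map_one, sub_self]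
  ext k
  rw [plog, coeff_mk, logOf, coeff_subst_eq_sum_range hh1, Finset.range_eq_Ico,
    Finset.sum_eq_sum_Ico_succ_bot k.succ_pos, coeff_log, if_pos rfl, zero_smul, zero_add]
  refine Finset.sum_congr (by ext; simp only [Finset.mem_Icc, Finset.mem_Ico]; omega)
    fun m hm => ?_
  rw [coeff_log, if_neg (by rw [Finset.mem_Ico] at hm; omega), algebraMap_smul]

theorem constantCoeff_pexp (f : R⟦X⟧) : constantCoeff (pexp f) = 1 := by
  simp [pexp]

theorem constantCoeff_plog (h : R⟦X⟧) : constantCoeff (plog h) = 0 := by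
  simp [plog]

theorem derivative_pexp {f : R⟦X⟧} (hf : constantCoeff f = 0) :
    d⁄dX R (pexp f) = d⁄dX R f * pexp f := by
  rw [pexp_eq_subst hf, derivative_subst (HasSubst.of_constantCoeff_zero' hf), derivative_exp,
    mul_comm]

theorem one_add_X_mul_derivative_log : (1 + X) * d⁄dX R (log R) = 1 := by
  ext n
  rcases n with _ | n
  · simp [deriv_log]
  · rw [add_mul, one_mul, map_add, coeff_succ_X_mul, deriv_log]
    simp [pow_succ]

theorem mul_derivative_plog {h : R⟦X⟧} (hh : constantCoeff h = 1) :
    h * d⁄dX R (plog h) = d⁄dX R h := by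
  have hh1 : HasSubst (h - 1) := HasSubst.of_constantCoeff_zero' (by simp [hh])
  have key := congrArg (substAlgHom hh1) (one_add_X_mul_derivative_log (R := R))
  rw [map_mul, map_add, map_one, coe_substAlgHom, subst_X hh1, add_sub_cancel] at key
  rw [plog_eq_logOf hh, logOf, derivative_subst hh1, ← mul_assoc, key, one_mul, map_sub,
    derivative_one, sub_zero]

theorem plog_pexp {f : R⟦X⟧} (hf : constantCoeff f = 0) : plog (pexp f) = f := by
  have := IsAddTorsionFree.of_module_rat R
  have hunit : IsUnit (pexp f) := isUnit_iff_constantCoeff.mpr (by simp [constantCoeff_pexp])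
  refine derivative.ext (hunit.mul_left_cancel ?_) (by rw [constantCoeff_plog, hf])
  rw [mul_derivative_plog (constantCoeff_pexp f), derivative_pexp hf, mul_comm]

theorem pexp_plog {h : R⟦X⟧} (hh : constantCoeff h = 1) : pexp (plog h) = h := by
  have := IsAddTorsionFree.of_module_rat R
  refine eq_of_derivative_eq_mul (derivative_pexp (constantCoeff_plog h)) ?_
    (by rw [constantCoeff_pexp, hh])
  rw [← mul_derivative_plog hh, mul_comm]

end ExpLog

section Adams

open PowerSeries ArithmeticFunction
open scoped ArithmeticFunction.Moebius

theorem Nat.sum_divisorsAntidiagonal_assoc {M : Type*} [AddCommMonoid M]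
    (k : ℕ) (F : ℕ → ℕ → ℕ → M) :
    ∑ x ∈ k.divisorsAntidiagonal, ∑ y ∈ x.2.divisorsAntidiagonal, F x.1 y.1 y.2 =
      ∑ x ∈ k.divisorsAntidiagonal, ∑ y ∈ x.1.divisorsAntidiagonal, F y.1 y.2 x.2 := by
  simp only [Finset.sum_sigma']
  apply Finset.sum_nbij' (fun ⟨⟨n, _⟩, ⟨m, j⟩⟩ ↦ ⟨(n * m, j), (n, m)⟩)
    (fun ⟨⟨_, j⟩, ⟨n, m⟩⟩ ↦ ⟨(n, m * j), (m, j)⟩) <;> aesop (add simp mul_assoc)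

namespace ArithmeticFunction

noncomputable def recip : ArithmeticFunction ℚ := ⟨fun n => (n : ℚ)⁻¹, by simp⟩

noncomputable def moebiusDiv : ArithmeticFunction ℚ := ⟨fun n => ((μ n : ℤ) : ℚ) / n, by simp⟩

theorem moebiusDiv_mul_recip : moebiusDiv * recip = 1 := by
  ext d
  have hsum : ∑ n ∈ d.divisors, ((μ n : ℤ) : ℚ) = (1 : ArithmeticFunction ℚ) d := by
    rw [← coe_moebius_mul_coe_zeta, coe_mul_zeta_apply]
    simp
  have hterm : ∀ x ∈ d.divisorsAntidiagonal,
      moebiusDiv x.1 * recip x.2 = ((μ x.1 : ℤ) : ℚ) / d := by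
    intro x hx
    obtain ⟨rfl, -⟩ := Nat.mem_divisorsAntidiagonal.mp hx
    change ((μ x.1 : ℤ) : ℚ) / x.1 * (x.2 : ℚ)⁻¹ = _
    push_cast
    ring
  rw [mul_apply, Finset.sum_congr rfl hterm, ← Finset.sum_div,
    Nat.sum_divisorsAntidiagonal (fun n _ => ((μ n : ℤ) : ℚ)), hsum, one_apply]
  split_ifs with h <;> simp [h]

end ArithmeticFunction

variable {R : Type*} [CommRing R] [Algebra ℚ R] (ψ : ℕ → R →ₐ[ℚ] R)

theorem coeff_adams_of_dvd (v : R⟦X⟧) {n k : ℕ} (h : n ∣ k) :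
    coeff k (adams ψ n v) = ψ n (coeff (k / n) v) := by
  rw [adams, coeff_mk, if_pos h]

/-- `Σₙ a(n) ψₙ(v)`. Its constant term is always `0` (`Nat.divisors 0 = ∅`), so `adamsSum ψ 1`
is the identity only on `z·R⟦z⟧`. -/
noncomputable def adamsSum (a : ArithmeticFunction ℚ) (v : R⟦X⟧) : R⟦X⟧ :=
  mk fun k => ∑ n ∈ k.divisors, a n • coeff k (adams ψ n v)

theorem coeff_adamsSum (a : ArithmeticFunction ℚ) (v : R⟦X⟧) (k : ℕ) :
    coeff k (adamsSum ψ a v) = ∑ x ∈ k.divisorsAntidiagonal, a x.1 • ψ x.1 (coeff x.2 v) := by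
  rw [adamsSum, coeff_mk, Nat.sum_divisorsAntidiagonal (fun n e => a n • ψ n (coeff e v))]
  exact Finset.sum_congr rfl fun n hn => by
    rw [coeff_adams_of_dvd ψ v (Nat.dvd_of_mem_divisors hn)]

theorem constantCoeff_adamsSum (a : ArithmeticFunction ℚ) (v : R⟦X⟧) :
    constantCoeff (adamsSum ψ a v) = 0 := by
  simp [adamsSum]

theorem adamsSum_one (hψ1 : ψ 1 = AlgHom.id ℚ R) {v : R⟦X⟧} (hv : constantCoeff v = 0) :
    adamsSum ψ 1 v = v := by
  ext k
  rcases eq_or_ne k 0 with rfl | hk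
  · simp [constantCoeff_adamsSum, hv]
  rw [adamsSum, coeff_mk, Finset.sum_eq_single_of_mem 1 (Nat.one_mem_divisors.mpr hk)
    fun n _ hn => by rw [one_apply_ne hn, zero_smul]]
  rw [one_one, one_smul, coeff_adams_of_dvd ψ v (one_dvd k), Nat.div_one, hψ1, AlgHom.id_apply]

theorem adamsSum_adamsSum (hψ : ∀ m n : ℕ, 1 ≤ m → 1 ≤ n → (ψ m).comp (ψ n) = ψ (m * n))
    (a b : ArithmeticFunction ℚ) (v : R⟦X⟧) :
    adamsSum ψ a (adamsSum ψ b v) = adamsSum ψ (a * b) v := by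
  ext k
  have hcomp : ∀ {n m : ℕ}, n ≠ 0 → m ≠ 0 → ∀ r, ψ n (ψ m r) = ψ (n * m) r := fun hn hm r =>
    DFunLike.congr_fun (hψ _ _ (Nat.one_le_iff_ne_zero.mpr hn) (Nat.one_le_iff_ne_zero.mpr hm)) r
  calc coeff k (adamsSum ψ a (adamsSum ψ b v))
      = ∑ x ∈ k.divisorsAntidiagonal, ∑ y ∈ x.2.divisorsAntidiagonal,
          (a x.1 * b y.1) • ψ (x.1 * y.1) (coeff y.2 v) := by
        simp only [coeff_adamsSum, map_sum, Finset.smul_sum, map_smul, smul_smul]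
        refine Finset.sum_congr rfl fun x hx => Finset.sum_congr rfl fun y hy => ?_
        rw [hcomp (Nat.left_ne_zero_of_mem_divisorsAntidiagonal hx)
          (Nat.left_ne_zero_of_mem_divisorsAntidiagonal hy)]
    _ = ∑ x ∈ k.divisorsAntidiagonal, ∑ y ∈ x.1.divisorsAntidiagonal,
          (a y.1 * b y.2) • ψ (y.1 * y.2) (coeff x.2 v) :=
        Nat.sum_divisorsAntidiagonal_assoc k
          fun n m j => (a n * b m) • ψ (n * m) (coeff j v)
    _ = coeff k (adamsSum ψ (a * b) v) := by
        simp only [coeff_adamsSum, mul_apply, Finset.sum_smul]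
        refine Finset.sum_congr rfl fun x _ => Finset.sum_congr rfl fun y hy => ?_
        rw [(Nat.mem_divisorsAntidiagonal.mp hy).1]

end Adams

section Plethystic

open PowerSeries ArithmeticFunction

variable {R : Type*} [CommRing R] [Algebra ℚ R] {ψ : ℕ → R →ₐ[ℚ] R}

theorem PExp_eq_pexp_adamsSum (f : R⟦X⟧) : PExp ψ f = pexp (adamsSum ψ recip f) := rfl

theorem PLog_eq_adamsSum_plog (h : R⟦X⟧) : PLog ψ h = adamsSum ψ moebiusDiv (plog h) := rfl

theorem constantCoeff_PExp (f : R⟦X⟧) : constantCoeff (PExp ψ f) = 1 := constantCoeff_pexp _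

theorem constantCoeff_PLog (h : R⟦X⟧) : constantCoeff (PLog ψ h) = 0 :=
  constantCoeff_adamsSum ψ moebiusDiv (plog h)

theorem PLog_PExp (hψ1 : ψ 1 = AlgHom.id ℚ R)
    (hψ : ∀ m n : ℕ, 1 ≤ m → 1 ≤ n → (ψ m).comp (ψ n) = ψ (m * n))
    {f : R⟦X⟧} (hf : constantCoeff f = 0) : PLog ψ (PExp ψ f) = f := by
  rw [PExp_eq_pexp_adamsSum, PLog_eq_adamsSum_plog, plog_pexp (constantCoeff_adamsSum ψ _ f),
    adamsSum_adamsSum ψ hψ, moebiusDiv_mul_recip, adamsSum_one ψ hψ1 hf]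

theorem PExp_PLog (hψ1 : ψ 1 = AlgHom.id ℚ R)
    (hψ : ∀ m n : ℕ, 1 ≤ m → 1 ≤ n → (ψ m).comp (ψ n) = ψ (m * n))
    {h : R⟦X⟧} (hh : constantCoeff h = 1) : PExp ψ (PLog ψ h) = h := by
  rw [PExp_eq_pexp_adamsSum, PLog_eq_adamsSum_plog, adamsSum_adamsSum ψ hψ, mul_comm,
    moebiusDiv_mul_recip, adamsSum_one ψ hψ1 (constantCoeff_plog h), pexp_plog hh]

end Plethystic

/-- `Log` and `Exp` are mutually inverse: for every `f ∈ z·R⟦z⟧` one has `Log(Exp(f)) = f`,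
for every `h ∈ 1 + z·R⟦z⟧` one has `Exp(Log(h)) = h`; in particular `Exp` is a bijection from
`z·R⟦z⟧` onto `1 + z·R⟦z⟧`.  Here `R` is a commutative `ℚ`-algebra equipped with Adams
operations `ψₙ` (n ≥ 1), i.e. `ℚ`-algebra homomorphisms with `ψ₁ = id` and `ψₘ∘ψₙ = ψₘₙ`. -/
theorem stmt7 {R : Type*} [CommRing R] [Algebra ℚ R]
    (ψ : ℕ → R →ₐ[ℚ] R) (hψ1 : ψ 1 = AlgHom.id ℚ R)
    (hψ : ∀ m n : ℕ, 1 ≤ m → 1 ≤ n → (ψ m).comp (ψ n) = ψ (m * n)) :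
    (∀ f : PowerSeries R, constantCoeff f = 0 → PLog ψ (PExp ψ f) = f) ∧
    (∀ h : PowerSeries R, constantCoeff h = 1 → PExp ψ (PLog ψ h) = h) ∧
    Set.BijOn (PExp ψ) {f : PowerSeries R | constantCoeff f = 0}
      {h : PowerSeries R | constantCoeff h = 1} := by
  have hLog_Exp := fun f (hf : constantCoeff f = 0) => PLog_PExp hψ1 hψ hf
  have hExp_Log := fun h (hh : constantCoeff h = 1) => PExp_PLog hψ1 hψ hh
  exact ⟨hLog_Exp, hExp_Log, Set.InvOn.bijOn ⟨hLog_Exp, hExp_Log⟩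
    (fun f _ => constantCoeff_PExp f) (fun h _ => constantCoeff_PLog h)⟩
end

section
/- Let (Ω_n)_{n≥1} and (Ω̄_n)_{n≥1} be two families of rational functions in ℚ(y). Then Ω_n = (y^{−1} − y)·Σ_{m ∣ n} (μ(m)/m)·ψₘ(Ω̄_{n/m}) holds for all n ≥ 1 if and only if Ω̄_n = Σ_{m ∣ n} (1/m)·ψₘ(Ω_{n/m})/(y^{−m} − yᵐ) holds for all n ≥ 1. -/
/-- The `ℚ`-algebra endomorphism `ψₘ` of `ℚ(y)` determined by `y ↦ yᵐ`, so that
`ψₘ(F)(y) = F(yᵐ)`. -/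
noncomputable def psiR (m : ℕ) (F : RatFunc ℚ) : RatFunc ℚ :=
  algebraMap (Polynomial ℚ) (RatFunc ℚ) (F.num.comp (Polynomial.X ^ m)) /
    algebraMap (Polynomial ℚ) (RatFunc ℚ) (F.denom.comp (Polynomial.X ^ m))

/-!
Both relations are Möbius inversion for the twisted Dirichlet convolution
`(f ⋆ b)(n) = ∑_{mk = n} f(m) ψₘ(b(k))`. Since `ψₘ ∘ ψₖ = ψₘₖ`, this is an action of the
Dirichlet ring, so `v ⋆ (w ⋆ b) = (v * w) ⋆ b`. Writing `aₙ = Ωₙ / (y⁻¹ - y)` and using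
`ψₘ(y⁻¹ - y) = y⁻ᵐ - yᵐ`, the relations read `a = w ⋆ Ω̄` and `Ω̄ = v ⋆ a` with `w(m) = μ(m)/m`
and `v(m) = 1/m`; and `v * w = (ζ * μ)/id = 1` because `m ↦ m` is completely multiplicative.
-/

namespace ArithmeticFunction

section TwistedSMul

open Finset

variable {R M : Type*} [CommSemiring R] [AddCommMonoid M] [Module R M] (ψ : ℕ → M →ₗ[R] M)

def twistedSMul (f : ArithmeticFunction R) (b : ℕ → M) (n : ℕ) : M :=
  ∑ x ∈ n.divisorsAntidiagonal, f x.1 • ψ x.1 (b x.2)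

theorem twistedSMul_apply (f : ArithmeticFunction R) (b : ℕ → M) (n : ℕ) :
    twistedSMul ψ f b n = ∑ m ∈ n.divisors, f m • ψ m (b (n / m)) :=
  Nat.sum_divisorsAntidiagonal fun i j => f i • ψ i (b j)

variable {ψ}

theorem twistedSMul_congr (f : ArithmeticFunction R) {b b' : ℕ → M}
    (h : ∀ n, 0 < n → b n = b' n) : twistedSMul ψ f b = twistedSMul ψ f b' := by
  ext n
  refine sum_congr rfl fun x hx => ?_
  rw [h x.2 (Nat.pos_of_ne_zero (Nat.right_ne_zero_of_mem_divisorsAntidiagonal hx))]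

theorem twistedSMul_mul (hψ : ∀ m k x, 0 < m → 0 < k → ψ m (ψ k x) = ψ (m * k) x)
    (f g : ArithmeticFunction R) (b : ℕ → M) :
    twistedSMul ψ (f * g) b = twistedSMul ψ f (twistedSMul ψ g b) := by
  ext n
  simp only [twistedSMul, mul_apply, sum_smul, map_sum, map_smul, smul_sum, mul_smul, sum_sigma']
  apply sum_nbij' (fun ⟨⟨_i, j⟩, ⟨k, l⟩⟩ ↦ ⟨(k, l * j), (l, j)⟩)
    (fun ⟨⟨i, _j⟩, ⟨k, l⟩⟩ ↦ ⟨(i * k, l), (i, k)⟩)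
  · aesop (add simp mul_assoc)
  · aesop (add simp mul_assoc)
  · aesop
  · aesop (add simp mul_assoc)
  rintro ⟨⟨i, j⟩, ⟨k, l⟩⟩ hx
  simp only [mem_sigma, Nat.mem_divisorsAntidiagonal] at hx
  obtain ⟨⟨rfl, hn⟩, rfl, -⟩ := hx
  obtain ⟨hk, hl⟩ := mul_ne_zero_iff.mp (left_ne_zero_of_mul hn)
  rw [hψ k l _ (Nat.pos_of_ne_zero hk) (Nat.pos_of_ne_zero hl)]

theorem twistedSMul_one (hψ₁ : ∀ x, ψ 1 x = x) (b : ℕ → M) {n : ℕ} (hn : 0 < n) :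
    twistedSMul ψ 1 b n = b n := by
  rw [twistedSMul, sum_eq_single (1, n)]
  · simp [hψ₁]
  · rintro ⟨i, j⟩ hx hne
    have hi : i ≠ 1 := by
      rintro rfl
      simp_all
    rw [one_apply_ne hi, zero_smul]
  · simp [hn.ne']

theorem eq_twistedSMul_of_mul_eq_one (hψ₁ : ∀ x, ψ 1 x = x)
    (hψ : ∀ m k x, 0 < m → 0 < k → ψ m (ψ k x) = ψ (m * k) x)
    {v w : ArithmeticFunction R} (hvw : v * w = 1) {a b : ℕ → M}
    (hab : ∀ n, 0 < n → a n = twistedSMul ψ w b n) {n : ℕ} (hn : 0 < n) :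
    b n = twistedSMul ψ v a n := by
  rw [twistedSMul_congr v hab, ← twistedSMul_mul hψ, hvw, twistedSMul_one hψ₁ b hn]

theorem forall_eq_twistedSMul_iff (hψ₁ : ∀ x, ψ 1 x = x)
    (hψ : ∀ m k x, 0 < m → 0 < k → ψ m (ψ k x) = ψ (m * k) x)
    {v w : ArithmeticFunction R} (hvw : v * w = 1) {a b : ℕ → M} :
    (∀ n, 0 < n → a n = twistedSMul ψ w b n) ↔ ∀ n, 0 < n → b n = twistedSMul ψ v a n :=
  ⟨fun h _ hn => eq_twistedSMul_of_mul_eq_one hψ₁ hψ hvw h hn,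
    fun h _ hn => eq_twistedSMul_of_mul_eq_one hψ₁ hψ ((mul_comm w v).trans hvw) h hn⟩

end TwistedSMul

theorem pdiv_mul_pdiv {K : Type*} [Semifield K] {g : ArithmeticFunction K}
    (hg : ∀ m n, g (m * n) = g m * g n) (f h : ArithmeticFunction K) :
    f.pdiv g * h.pdiv g = (f * h).pdiv g := by
  ext n
  simp only [mul_apply, pdiv_apply, Finset.sum_div]
  refine Finset.sum_congr rfl fun x hx => ?_
  rw [← (Nat.mem_divisorsAntidiagonal.mp hx).1, hg, div_mul_div_comm]

theorem zeta_pdiv_id_mul_moebius_pdiv_id {K : Type*} [Field K] :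
    ((zeta : ArithmeticFunction ℕ) : ArithmeticFunction K).pdiv
        ((ArithmeticFunction.id : ArithmeticFunction ℕ) : ArithmeticFunction K) *
      ((moebius : ArithmeticFunction ℤ) : ArithmeticFunction K).pdiv
        ((ArithmeticFunction.id : ArithmeticFunction ℕ) : ArithmeticFunction K) = 1 := by
  rw [pdiv_mul_pdiv (fun m n => by simp [natCoe_apply]), coe_zeta_mul_coe_moebius]
  ext n
  rcases eq_or_ne n 1 with rfl | hn
  · simp [natCoe_apply]
  · simp [one_apply_ne hn]

end ArithmeticFunction

namespace RatFunc

variable (K : Type*) [Field K]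

/-- The substitution `X ↦ X ^ m`, with junk value the identity at `m = 0`. -/
noncomputable def expand (m : ℕ) : RatFunc K →ₐ[K] RatFunc K :=
  if hm : 0 < m then
    mapAlgHom (Polynomial.expand K m)
      (nonZeroDivisors_le_comap_nonZeroDivisors_of_injective _ (Polynomial.expand_injective hm))
  else AlgHom.id K _

variable {K}

theorem expand_div_algebraMap {m : ℕ} (hm : 0 < m) (p q : Polynomial K) :
    expand K m (algebraMap _ _ p / algebraMap _ _ q) =
      algebraMap _ _ (Polynomial.expand K m p) / algebraMap _ _ (Polynomial.expand K m q) := by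
  rw [expand, dif_pos hm, coe_mapAlgHom_eq_coe_map, map_apply_div]

theorem expand_X {m : ℕ} (hm : 0 < m) : expand K m X = X ^ m := by
  rw [← algebraMap_X, ← div_one (algebraMap _ _ Polynomial.X),
    ← map_one (algebraMap (Polynomial K) _), expand_div_algebraMap hm]
  simp

theorem expand_one (F : RatFunc K) : expand K 1 F = F := by
  induction F using RatFunc.induction_on with
  | f p q => rw [expand_div_algebraMap one_pos, Polynomial.expand_one, Polynomial.expand_one]

theorem expand_mul {m k : ℕ} (hm : 0 < m) (hk : 0 < k) (F : RatFunc K) :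
    expand K (m * k) F = expand K m (expand K k F) := by
  induction F using RatFunc.induction_on with
  | f p q =>
    rw [expand_div_algebraMap (mul_pos hm hk), expand_div_algebraMap hk, expand_div_algebraMap hm,
      Polynomial.expand_mul, Polynomial.expand_mul]

theorem inv_X_sub_X_ne_zero : (X⁻¹ - X : RatFunc K) ≠ 0 := by
  intro h
  have hX2 : (X * X : RatFunc K) = 1 := by
    rw [← inv_mul_cancel₀ (X_ne_zero (K := K)), sub_eq_zero.mp h]
  have := congrArg intDegree hX2
  rw [intDegree_mul X_ne_zero X_ne_zero, intDegree_X, intDegree_one] at this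
  omega

end RatFunc

theorem psiR_eq_expand {m : ℕ} (hm : 0 < m) (F : RatFunc ℚ) :
    psiR m F = RatFunc.expand ℚ m F := by
  conv_rhs => rw [← F.num_div_denom]
  rw [RatFunc.expand_div_algebraMap hm, psiR, Polynomial.expand_eq_comp_X_pow,
    Polynomial.expand_eq_comp_X_pow]

theorem psiR_div_inv_X_sub_X {m : ℕ} (hm : 0 < m) (F : RatFunc ℚ) :
    psiR m (F / (RatFunc.X⁻¹ - RatFunc.X)) = psiR m F / ((RatFunc.X ^ m)⁻¹ - RatFunc.X ^ m) := by
  rw [psiR_eq_expand hm, psiR_eq_expand hm, map_div₀, map_sub, map_inv₀, RatFunc.expand_X hm]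

-- This coercion goes through `RingHomClass.toLinearMapClassRat`, so it uses the `ℚ`-module
-- structure of a field of characteristic zero; `AlgHom.toLinearMap` would use the other one,
-- which `RatFunc ℚ` carries as rational functions over `ℚ`, and the instances would not unify.
local notation "ψ" => fun m : ℕ => (RatFunc.expand ℚ m : RatFunc ℚ →ₗ[ℚ] RatFunc ℚ)

theorem twistedSMul_expand_apply (f : ArithmeticFunction ℚ) (b : ℕ → RatFunc ℚ) (n : ℕ) :
    ArithmeticFunction.twistedSMul ψ f b n =
      ∑ m ∈ n.divisors, RatFunc.C (f m) * psiR m (b (n / m)) := by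
  rw [ArithmeticFunction.twistedSMul_apply]
  refine Finset.sum_congr rfl fun m hm => ?_
  rw [psiR_eq_expand (Nat.pos_of_mem_divisors hm), Rat.smul_def]
  simp

open ArithmeticFunction in
/-- Let `(Ω_n)` and `(Ω̄_n)` be two families in `ℚ(y)`.  Then
`Ω_n = (y⁻¹ − y)·Σ_{m∣n} (μ(m)/m)·ψₘ(Ω̄_{n/m})` holds for all `n ≥ 1` if and only if
`Ω̄_n = Σ_{m∣n} (1/m)·ψₘ(Ω_{n/m})/(y^{−m} − yᵐ)` holds for all `n ≥ 1`. -/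
theorem stmt10 (Ω Ωb : ℕ → RatFunc ℚ) :
    (∀ n : ℕ, 1 ≤ n → Ω n = ((RatFunc.X : RatFunc ℚ)⁻¹ - RatFunc.X) *
        ∑ m ∈ n.divisors,
          RatFunc.C (((ArithmeticFunction.moebius m : ℤ) : ℚ) / m) * psiR m (Ωb (n / m)))
      ↔ (∀ n : ℕ, 1 ≤ n → Ωb n = ∑ m ∈ n.divisors,
          RatFunc.C (1 / (m : ℚ)) *
            (psiR m (Ω (n / m)) / (((RatFunc.X : RatFunc ℚ) ^ m)⁻¹ - RatFunc.X ^ m))) := by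
  have hD : (RatFunc.X⁻¹ - RatFunc.X : RatFunc ℚ) ≠ 0 := RatFunc.inv_X_sub_X_ne_zero
  have hψ₁ : ∀ F, ψ 1 F = F := RatFunc.expand_one
  have hψ : ∀ m k F, 0 < m → 0 < k → ψ m (ψ k F) = ψ (m * k) F :=
    fun m k F hm hk => (RatFunc.expand_mul hm hk F).symm
  refine (forall₂_congr fun n hn => ?_).trans
    ((forall_eq_twistedSMul_iff (a := fun n => Ω n / (RatFunc.X⁻¹ - RatFunc.X)) (b := Ωb) hψ₁ hψ
      zeta_pdiv_id_mul_moebius_pdiv_id).trans (forall₂_congr fun n hn => ?_))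
  · rw [twistedSMul_expand_apply, div_eq_iff hD, mul_comm]
    simp [intCoe_apply, natCoe_apply]
  · rw [twistedSMul_expand_apply]
    refine Eq.congr_right (Finset.sum_congr rfl fun m hm => ?_)
    have hm₀ := Nat.pos_of_mem_divisors hm
    simp [psiR_div_inv_X_sub_X hm₀, natCoe_apply, hm₀.ne']
end

section
/- Let g ≥ 0 and r ≥ 1 be integers and let y, t be complex numbers with 0 < |y| < 1 and 0 < |t| < |y|^{2r}. Set Z(u) = (1 − yu)^{2g}/((1 − u)(1 − y²u)). Then (−y)^{r²(1−g)} · ((1−y)^{2g}/(y²−1)) · Π_{i=1}^{r−1} Z(y^{2i}) · Π_{k=1}^{∞} Π_{i=−r}^{r−1} Z(y^{2i} tᵏ) = (−y)^{−r²(1−g)} · Π_{n=1}^{∞} [ (1 − y^{−2r+1} t^{n−1})^{2g} (1 − y^{2r−1} tⁿ)^{2g} / ((1 − y^{−2r} t^{n−1})(1 − y^{2r} tⁿ)(1 − tⁿ)²) · Π_{k=1}^{r−1} (1 − y^{−2k+1} t^{n−1})^{2g} (1 − y^{2k−1} tⁿ)^{2g} / ((1 − y^{−2k} t^{n−1})²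 (1 − y^{2k} tⁿ)²) ], where all infinite products over k ≥ 1 resp. n ≥ 1 converge absolutely. -/
/-!
Write `Z(u) = (1 - yu)^{2g} / ((1 - u)(1 - y²u))`. Since `Z_y(u) = Z_{1/y}(y²u)`, the `2r` factors
`Z(y^{2i}u)`, `-r ≤ i < r`, telescope into `A(1/y, u) · A(y, u) / (1 - u)²`, where
`A(w, u) = (1 - u) ∏_{j<r} Z_w(w^{2j}u)` is a ratio of products of linear factors in `u`,
regular at `u = 1`. Both sides of the identity are therefore regrouped products of the factors `A(1/y, tⁿ)` and
`A(y, tⁿ⁺¹)/(1 - tⁿ⁺¹)²`; they differ only by the boundary factor `A(1/y, 1)`, which the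
functional equation `Z(1/(y²u)) = (yu)^{2-2g} Z(u)` identifies with
`y^{2r²(1-g)} (1-y)^{2g}/(y²-1) ∏_{i=1}^{r-1} Z(y^{2i})`. Absolute convergence comes from each
factor being `1 + O(tⁿ)`, by differentiability at `0`.
-/

open Finset Asymptotics Topology

lemma summable_norm_apply_pow_sub_one {𝕜 R : Type*} [NontriviallyNormedField 𝕜] [NormedRing R]
    [NormedSpace 𝕜 R] {F : 𝕜 → R} (hF : DifferentiableAt 𝕜 F 0) (hF0 : F 0 = 1) {t : 𝕜}
    (ht : ‖t‖ < 1) (m : ℕ) : Summable fun n => ‖F (t ^ (n + m)) - 1‖ := by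
  have hF' : (fun x => F x - 1) =O[𝓝 0] fun x => x := by simpa [hF0] using hF.isBigO_sub
  refine hF'.comp_summable_norm (g := fun n => t ^ (n + m)) ?_
  simpa only [norm_pow] using
    (summable_nat_add_iff m).mpr (summable_geometric_of_lt_one (norm_nonneg t) ht)

lemma multipliable_apply_pow {𝕜 R : Type*} [NontriviallyNormedField 𝕜] [NormedCommRing R]
    [NormOneClass R] [CompleteSpace R] [NormedSpace 𝕜 R] {F : 𝕜 → R}
    (hF : DifferentiableAt 𝕜 F 0) (hF0 : F 0 = 1) {t : 𝕜} (ht : ‖t‖ < 1) (m : ℕ) :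
    Multipliable fun n => F (t ^ (n + m)) := by
  simpa using multipliable_one_add_of_summable (summable_norm_apply_pow_sub_one hF hF0 ht m)

lemma tprod_mul_eq_mul_tprod_succ_mul {M : Type*} [CommMonoid M] [TopologicalSpace M] [T2Space M]
    [ContinuousMul M] {f g : ℕ → M} (hf : Multipliable f) (hf' : Multipliable fun n => f (n + 1))
    (hg : Multipliable g) : ∏' n, f n * g n = f 0 * ∏' n, f (n + 1) * g n := by
  rw [hf.tprod_mul hg, hf'.tprod_mul hg, tprod_eq_zero_mul' hf', mul_assoc]

noncomputable def curveZeta (g : ℕ) (y u : ℂ) : ℂ :=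
  (1 - y * u) ^ (2 * g) / ((1 - u) * (1 - y ^ 2 * u))

/-- Equal to `(1 - u) * ∏ j ∈ range r, curveZeta g w (w ^ (2 * j) * u)` for `u ≠ 1`, but written
with the factor `1 - u` cancelled, so that it also has the right value at `u = 1`. -/
noncomputable def zetaHalfProd (g r : ℕ) (w u : ℂ) : ℂ :=
  (1 - w ^ (2 * r - 1) * u) ^ (2 * g) / (1 - w ^ (2 * r) * u) *
    ∏ k ∈ Icc 1 (r - 1), (1 - w ^ (2 * k - 1) * u) ^ (2 * g) / (1 - w ^ (2 * k) * u) ^ 2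

lemma curveZeta_eq_inv (g : ℕ) {y : ℂ} (hy : y ≠ 0) (u : ℂ) :
    curveZeta g y u = curveZeta g y⁻¹ (y ^ 2 * u) := by
  unfold curveZeta
  rw [mul_comm (1 - u)]
  congr 3 <;> field_simp

lemma curveZeta_functional_equation (g : ℕ) {y u : ℂ} (hy : y ≠ 0) (hu : u ≠ 0) :
    curveZeta g y (y ^ 2 * u)⁻¹ = (y * u) ^ (2 * (1 - g : ℤ)) * curveZeta g y u := by
  have h1 : 1 - y * (y ^ 2 * u)⁻¹ = -(1 - y * u) / (y * u) := by field_simp; ring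
  have h2 : 1 - (y ^ 2 * u)⁻¹ = -(1 - y ^ 2 * u) / (y ^ 2 * u) := by field_simp; ring
  have h3 : 1 - y ^ 2 * (y ^ 2 * u)⁻¹ = -(1 - u) / u := by field_simp; ring
  rw [curveZeta, curveZeta, h1, h2, h3, div_pow, Even.neg_pow (even_two_mul g),
    show (2 * (1 - g : ℤ)) = ((2 : ℕ) : ℤ) - ((2 * g : ℕ) : ℤ) by push_cast; ring,
    zpow_sub₀ (by simp [hy, hu]), zpow_natCast, zpow_natCast]
  simp only [div_eq_mul_inv, mul_inv, inv_inv, neg_mul, neg_neg, mul_neg]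
  ring

lemma Icc_one_eq_insert {r : ℕ} (hr : 1 ≤ r) : Icc 1 r = insert r (Icc 1 (r - 1)) := by
  ext k; simp only [mem_Icc, mem_insert]; omega

lemma zetaHalfProd_succ (g : ℕ) {r : ℕ} (hr : 1 ≤ r) (w u : ℂ) :
    zetaHalfProd g (r + 1) w u = curveZeta g w (w ^ (2 * r) * u) * zetaHalfProd g r w u := by
  rw [zetaHalfProd, zetaHalfProd, curveZeta, Nat.add_sub_cancel, Icc_one_eq_insert hr,
    prod_insert (by simp only [mem_Icc]; omega),
    show 2 * (r + 1) - 1 = 2 * r + 1 by omega, show 2 * (r + 1) = 2 * r + 2 by ring,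
    show w * (w ^ (2 * r) * u) = w ^ (2 * r + 1) * u by ring,
    show w ^ 2 * (w ^ (2 * r) * u) = w ^ (2 * r + 2) * u by ring]
  simp only [div_eq_mul_inv, mul_inv, pow_two]
  ring

lemma zetaHalfProd_eq_mul_prod (g : ℕ) (w : ℂ) {u : ℂ} (hu : u ≠ 1) {r : ℕ} (hr : 1 ≤ r) :
    zetaHalfProd g r w u = (1 - u) * ∏ j ∈ range r, curveZeta g w (w ^ (2 * j) * u) := by
  induction r, hr using Nat.le_induction with
  | base =>
    have : (1 : ℂ) - u ≠ 0 := sub_ne_zero.mpr hu.symm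
    simp [zetaHalfProd, curveZeta]
    field_simp
  | succ r hr ih => rw [zetaHalfProd_succ g hr, ih, prod_range_succ]; ring

lemma zetaHalfProd_zero (g r : ℕ) (w : ℂ) : zetaHalfProd g r w 0 = 1 := by
  simp [zetaHalfProd]

lemma differentiableAt_zetaHalfProd (g r : ℕ) (w : ℂ) :
    DifferentiableAt ℂ (zetaHalfProd g r w) 0 := by
  unfold zetaHalfProd
  fun_prop (disch := simp)

lemma prod_Icc_neg_eq_prod_range_mul {M : Type*} [CommMonoid M] (f : ℤ → M) (r : ℕ) :
    ∏ i ∈ Icc (-(r : ℤ)) (r - 1), f i = (∏ j ∈ range r, f (-(j + 1))) * ∏ j ∈ range r, f j := by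
  induction r with
  | zero => simp
  | succ r ih =>
    have hIcc : Icc (-((r + 1 : ℕ) : ℤ)) ((r + 1 : ℕ) - 1) =
        insert (-(r + 1 : ℤ)) (insert (r : ℤ) (Icc (-(r : ℤ)) (r - 1))) := by
      ext i; simp only [mem_Icc, mem_insert]; omega
    rw [hIcc, prod_insert (by simp only [mem_insert, mem_Icc]; omega),
      prod_insert (by simp only [mem_Icc]; omega), ih, prod_range_succ, prod_range_succ]
    ac_rfl

lemma prod_curveZeta_Icc (g : ℕ) {y u : ℂ} (hy : y ≠ 0) (hu : u ≠ 1) {r : ℕ} (hr : 1 ≤ r) :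
    ∏ i ∈ Icc (-(r : ℤ)) (r - 1), curveZeta g y (y ^ (2 * i) * u) =
      zetaHalfProd g r y⁻¹ u * zetaHalfProd g r y u / (1 - u) ^ 2 := by
  have hneg : ∀ j : ℕ, curveZeta g y (y ^ (2 * (-(j + 1) : ℤ)) * u) =
      curveZeta g y⁻¹ (y⁻¹ ^ (2 * j) * u) := fun j => by
    rw [curveZeta_eq_inv g hy, ← mul_assoc, ← zpow_natCast, ← zpow_add₀ hy, inv_pow,
      ← zpow_natCast, ← zpow_neg]
    congr 3
    push_cast; ring
  have hpos : ∀ j : ℕ, y ^ (2 * (j : ℤ)) = y ^ (2 * j) := fun j => by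
    rw [← zpow_natCast]; push_cast; rfl
  rw [prod_Icc_neg_eq_prod_range_mul]
  simp only [hneg, hpos]
  rw [eq_div_iff (pow_ne_zero 2 (sub_ne_zero.mpr hu.symm)), zetaHalfProd_eq_mul_prod g _ hu hr,
    zetaHalfProd_eq_mul_prod g _ hu hr]
  ring

lemma zetaHalfProd_inv_one (g : ℕ) {y : ℂ} (hy : y ≠ 0) {r : ℕ} (hr : 1 ≤ r) :
    zetaHalfProd g r y⁻¹ 1 = y ^ (2 * ((r : ℤ) ^ 2 * (1 - g))) * ((1 - y) ^ (2 * g) / (y ^ 2 - 1)) *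
      ∏ i ∈ Icc 1 (r - 1), curveZeta g y (y ^ (2 * i)) := by
  induction r, hr using Nat.le_induction with
  | base =>
    have h1 : 1 - y⁻¹ = -(1 - y) / y := by field_simp; ring
    have h2 : 1 - y⁻¹ ^ 2 = (y ^ 2 - 1) / y ^ 2 := by field_simp
    rw [zetaHalfProd, Icc_eq_empty (by norm_num), prod_empty, prod_empty,
      show (2 * (((1 : ℕ) : ℤ) ^ 2 * (1 - g))) = ((2 : ℕ) : ℤ) - ((2 * g : ℕ) : ℤ) by push_cast; ring,
      zpow_sub₀ hy, zpow_natCast, zpow_natCast]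
    simp only [Nat.add_one_sub_one, pow_one, mul_one, h1, h2, div_pow,
      Even.neg_pow (even_two_mul g)]
    field_simp
  | succ r hr ih =>
    have hZ : curveZeta g y⁻¹ (y⁻¹ ^ (2 * r) * 1) = curveZeta g y (y ^ 2 * y ^ (2 * r))⁻¹ := by
      rw [curveZeta_eq_inv g hy (y ^ 2 * y ^ (2 * r))⁻¹, mul_one, mul_inv, ← mul_assoc,
        mul_inv_cancel₀ (pow_ne_zero 2 hy), one_mul, inv_pow]
    have hexp : y ^ (2 * (((r + 1 : ℕ) : ℤ) ^ 2 * (1 - g))) =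
        y ^ (2 * ((r : ℤ) ^ 2 * (1 - g))) * (y * y ^ (2 * r)) ^ (2 * (1 - g : ℤ)) := by
      rw [← pow_succ', ← zpow_natCast, ← zpow_mul, ← zpow_add₀ hy]
      push_cast; ring_nf
    rw [zetaHalfProd_succ g hr, hZ, curveZeta_functional_equation g hy (pow_ne_zero _ hy), ih,
      Nat.add_sub_cancel, Icc_one_eq_insert hr, prod_insert (by simp only [mem_Icc]; omega), hexp]
    ring

lemma zetaHalfProd_inv_mul_div (g : ℕ) {r : ℕ} (hr : 1 ≤ r) (y u v : ℂ) :
    ((1 - y ^ (-(2 * (r : ℤ)) + 1) * u) ^ (2 * g) * (1 - y ^ (2 * (r : ℤ) - 1) * v) ^ (2 * g) /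
        ((1 - y ^ (-(2 * (r : ℤ))) * u) * (1 - y ^ (2 * (r : ℤ)) * v) * (1 - v) ^ 2)) *
      ∏ k ∈ Icc 1 (r - 1),
        (1 - y ^ (-(2 * (k : ℤ)) + 1) * u) ^ (2 * g) * (1 - y ^ (2 * (k : ℤ) - 1) * v) ^ (2 * g) /
          ((1 - y ^ (-(2 * (k : ℤ))) * u) ^ 2 * (1 - y ^ (2 * (k : ℤ)) * v) ^ 2) =
      zetaHalfProd g r y⁻¹ u * (zetaHalfProd g r y v / (1 - v) ^ 2) := by
  have hneg : ∀ (a : ℤ) (m : ℕ), a = -m → y ^ a = y⁻¹ ^ m := by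
    rintro a m rfl; rw [zpow_neg, zpow_natCast, inv_pow]
  have hpos : ∀ (a : ℤ) (m : ℕ), a = m → y ^ a = y ^ m := by
    rintro a m rfl; exact zpow_natCast y m
  have hfactor : ∀ k ∈ Icc 1 (r - 1),
      (1 - y ^ (-(2 * (k : ℤ)) + 1) * u) ^ (2 * g) * (1 - y ^ (2 * (k : ℤ) - 1) * v) ^ (2 * g) /
          ((1 - y ^ (-(2 * (k : ℤ))) * u) ^ 2 * (1 - y ^ (2 * (k : ℤ)) * v) ^ 2) =
        (1 - y⁻¹ ^ (2 * k - 1) * u) ^ (2 * g) / (1 - y⁻¹ ^ (2 * k) * u) ^ 2 *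
          ((1 - y ^ (2 * k - 1) * v) ^ (2 * g) / (1 - y ^ (2 * k) * v) ^ 2) := fun k hk => by
    have hk : 1 ≤ k := (mem_Icc.mp hk).1
    rw [hneg _ (2 * k - 1) (by omega), hpos _ (2 * k - 1) (by omega), hneg _ (2 * k) (by omega),
      hpos _ (2 * k) (by omega), mul_div_mul_comm]
  rw [prod_congr rfl hfactor, prod_mul_distrib, hneg _ (2 * r - 1) (by omega),
    hpos _ (2 * r - 1) (by omega), hneg _ (2 * r) (by omega), hpos _ (2 * r) (by omega),
    zetaHalfProd, zetaHalfProd]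
  simp only [div_eq_mul_inv, mul_inv]
  ring

theorem stmt12_general (g r : ℕ) (hr : 1 ≤ r) (y t : ℂ)
    (hy0 : 0 < ‖y‖) (hy1 : ‖y‖ < 1)
    (ht : ‖t‖ < ‖y‖ ^ (2 * r)) :
    let Z : ℂ → ℂ := fun u => (1 - y * u) ^ (2 * g) / ((1 - u) * (1 - y ^ 2 * u))
    let L : ℕ → ℂ := fun k =>
      ∏ i ∈ Finset.Icc (-(r : ℤ)) ((r : ℤ) - 1), Z (y ^ (2 * i) * t ^ (k + 1))
    let Rn : ℕ → ℂ := fun n =>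
      ((1 - y ^ (-(2 * (r : ℤ)) + 1) * t ^ n) ^ (2 * g)
          * (1 - y ^ (2 * (r : ℤ) - 1) * t ^ (n + 1)) ^ (2 * g) /
        ((1 - y ^ (-(2 * (r : ℤ))) * t ^ n) * (1 - y ^ (2 * (r : ℤ)) * t ^ (n + 1))
          * (1 - t ^ (n + 1)) ^ 2)) *
      ∏ k ∈ Finset.Icc 1 (r - 1),
        (1 - y ^ (-(2 * (k : ℤ)) + 1) * t ^ n) ^ (2 * g)
            * (1 - y ^ (2 * (k : ℤ) - 1) * t ^ (n + 1)) ^ (2 * g) /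
          ((1 - y ^ (-(2 * (k : ℤ))) * t ^ n) ^ 2 * (1 - y ^ (2 * (k : ℤ)) * t ^ (n + 1)) ^ 2)
    Summable (fun k => ‖L k - 1‖) ∧
    Summable (fun n => ‖Rn n - 1‖) ∧
    (-y) ^ ((r : ℤ) ^ 2 * (1 - (g : ℤ))) * ((1 - y) ^ (2 * g) / (y ^ 2 - 1)) *
        (∏ i ∈ Finset.Icc 1 (r - 1), Z (y ^ (2 * i))) * (∏' k, L k)
      = (-y) ^ (-((r : ℤ) ^ 2 * (1 - (g : ℤ)))) * ∏' n, Rn n := by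
  intro Z L Rn
  have hy : y ≠ 0 := norm_pos_iff.mp hy0
  have ht1 : ‖t‖ < 1 := ht.trans_le (pow_le_one₀ (norm_nonneg y) hy1.le)
  set A : ℂ → ℂ := zetaHalfProd g r y⁻¹ with hA_def
  set B : ℂ → ℂ := fun u => zetaHalfProd g r y u / (1 - u) ^ 2
  have hA : DifferentiableAt ℂ A 0 := differentiableAt_zetaHalfProd g r y⁻¹
  have hB : DifferentiableAt ℂ B 0 :=
    (differentiableAt_zetaHalfProd g r y).div (by fun_prop) (by simp)
  have hA0 : A 0 = 1 := zetaHalfProd_zero g r y⁻¹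
  have hB0 : B 0 = 1 := by simp [B, zetaHalfProd_zero]
  have hL : ∀ k, L k = A (t ^ (k + 1)) * B (t ^ (k + 1)) := fun k => by
    have hne : t ^ (k + 1) ≠ 1 := fun h => by
      simpa [← norm_pow, h] using pow_lt_one₀ (norm_nonneg t) ht1 k.succ_ne_zero
    exact (prod_curveZeta_Icc g hy hne hr).trans (mul_div_assoc _ _ _)
  have hR : ∀ n, Rn n = A (t ^ n) * B (t ^ (n + 1)) := fun n =>
    zetaHalfProd_inv_mul_div g hr y _ _
  have hAB : DifferentiableAt ℂ (fun u => A u * B (t * u)) 0 :=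
    hA.fun_mul (DifferentiableAt.comp (g := B) 0 (by simpa using hB) (by fun_prop))
  refine ⟨?_, ?_, ?_⟩
  · simpa only [hL] using summable_norm_apply_pow_sub_one (hA.fun_mul hB) (by simp [hA0, hB0]) ht1 1
  · simpa only [hR, add_zero, pow_succ'] using
      summable_norm_apply_pow_sub_one hAB (by simp [hA0, hB0]) ht1 0
  have hprod : ∏' n, Rn n = A 1 * ∏' k, L k := by
    simp_rw [hR, hL]
    simpa using tprod_mul_eq_mul_tprod_succ_mul (multipliable_apply_pow hA hA0 ht1 0)
      (multipliable_apply_pow hA hA0 ht1 1) (multipliable_apply_pow hB hB0 ht1 1)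
  have hZ : Z = curveZeta g y := rfl
  rw [hprod, hA_def, hZ, zetaHalfProd_inv_one g hy hr, ← Even.neg_zpow (even_two_mul _),
    two_mul ((r : ℤ) ^ 2 * (1 - g)), zpow_add₀ (neg_ne_zero.mpr hy), zpow_neg]
  field_simp

/-- Let `g ≥ 0`, `r ≥ 1` be integers and `y, t` complex numbers with `0 < |y| < 1` and
`0 < |t| < |y|^{2r}`.  Set `Z(u) = (1 − yu)^{2g}/((1 − u)(1 − y²u))`.  Then
`(−y)^{r²(1−g)}·((1−y)^{2g}/(y²−1))·Π_{i=1}^{r−1} Z(y^{2i})·Π_{k=1}^∞ Π_{i=−r}^{r−1} Z(y^{2i}tᵏ)`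
equals
`(−y)^{−r²(1−g)}·Π_{n=1}^∞ [(1−y^{−2r+1}t^{n−1})^{2g}(1−y^{2r−1}tⁿ)^{2g}/((1−y^{−2r}t^{n−1})(1−y^{2r}tⁿ)(1−tⁿ)²)·Π_{k=1}^{r−1}(1−y^{−2k+1}t^{n−1})^{2g}(1−y^{2k−1}tⁿ)^{2g}/((1−y^{−2k}t^{n−1})²(1−y^{2k}tⁿ)²)]`,
where the infinite products over `k ≥ 1` resp. `n ≥ 1` converge absolutely.
(The products over `k ≥ 1` resp. `n ≥ 1` are indexed below by `ℕ`, shifted by one.) -/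
theorem stmt12 (g r : ℕ) (hr : 1 ≤ r) (y t : ℂ)
    (hy0 : 0 < ‖y‖) (hy1 : ‖y‖ < 1)
    (ht0 : 0 < ‖t‖) (ht : ‖t‖ < ‖y‖ ^ (2 * r)) :
    let Z : ℂ → ℂ := fun u => (1 - y * u) ^ (2 * g) / ((1 - u) * (1 - y ^ 2 * u))
    let L : ℕ → ℂ := fun k =>
      ∏ i ∈ Finset.Icc (-(r : ℤ)) ((r : ℤ) - 1), Z (y ^ (2 * i) * t ^ (k + 1))
    let Rn : ℕ → ℂ := fun n =>
      ((1 - y ^ (-(2 * (r : ℤ)) + 1) * t ^ n) ^ (2 * g)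
          * (1 - y ^ (2 * (r : ℤ) - 1) * t ^ (n + 1)) ^ (2 * g) /
        ((1 - y ^ (-(2 * (r : ℤ))) * t ^ n) * (1 - y ^ (2 * (r : ℤ)) * t ^ (n + 1))
          * (1 - t ^ (n + 1)) ^ 2)) *
      ∏ k ∈ Finset.Icc 1 (r - 1),
        (1 - y ^ (-(2 * (k : ℤ)) + 1) * t ^ n) ^ (2 * g)
            * (1 - y ^ (2 * (k : ℤ) - 1) * t ^ (n + 1)) ^ (2 * g) /
          ((1 - y ^ (-(2 * (k : ℤ))) * t ^ n) ^ 2 * (1 - y ^ (2 * (k : ℤ)) * t ^ (n + 1)) ^ 2)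
    Summable (fun k => ‖L k - 1‖) ∧
    Summable (fun n => ‖Rn n - 1‖) ∧
    (-y) ^ ((r : ℤ) ^ 2 * (1 - (g : ℤ))) * ((1 - y) ^ (2 * g) / (y ^ 2 - 1)) *
        (∏ i ∈ Finset.Icc 1 (r - 1), Z (y ^ (2 * i))) * (∏' k, L k)
      = (-y) ^ (-((r : ℤ) ^ 2 * (1 - (g : ℤ)))) * ∏' n, Rn n :=
  stmt12_general g r hr y t hy0 hy1 ht
end

section
/- Let ℓ ≥ 2, let r^{(1)}, …, r^{(ℓ)} be positive integers with sum r, let α be an integer, and for 2 ≤ i ≤ ℓ set mᵢ = r^{(i)} + r^{(i−1)} and cᵢ = (α/r)·Σ_{k=i}^{ℓ} r^{(k)}. Then for every real y > 1, the series Σ y^{2α(r − r^{(1)}) − 2 Σ_{i=2}^{ℓ} mᵢ sᵢ}, summed over all tuples (s₂, …, s_ℓ) ∈ ℤ^{ℓ−1} with sᵢ > cᵢ for all i, converges absolutely and equals (−1)^{ℓ−1} · Π_{i=2}^{ℓ} y^{2mᵢ{cᵢ}}/(1 − y^{2mᵢ}), where {x} = x − ⌊x⌋ denotes the fractional part. 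-/
/-!
Substituting `sᵢ = ⌊cᵢ⌋ + 1 + tᵢ` with `tᵢ ∈ ℕ` turns the sum into a product of positive
geometric series, `Σ_{s > c} u^{-s} = u^{-⌊c⌋}/(u - 1)` with `u = y^{2mᵢ}`. Writing
`⌊cᵢ⌋ = cᵢ - {cᵢ}` leaves the prefactor `y^{2α(r - r^{(1)}) - 2Σᵢ mᵢcᵢ}`, which is `1`: with
`Sᵢ = Σ_{k ≥ i} r^{(k)}` we have `mᵢ Sᵢ = S_{i-1}Sᵢ - SᵢS_{i+1}`, so `Σᵢ mᵢSᵢ` telescopes to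
`r (r - r^{(1)})`.
-/

open Finset

universe u v

theorem HasSum.pi_prod_of_nonneg {ι : Type u} [Fintype ι] {κ : ι → Type v}
    {f : ∀ i, κ i → ℝ} {a : ι → ℝ} (hf : ∀ i, HasSum (f i) (a i))
    (hnn : ∀ i k, 0 ≤ f i k) :
    HasSum (fun g : ∀ i, κ i => ∏ i, f i (g i)) (∏ i, a i) := by
  let P : Type u → Prop := fun ι => ∀ [Fintype ι] {κ : ι → Type v}
    {f : ∀ i, κ i → ℝ} {a : ι → ℝ}, (∀ i, HasSum (f i) (a i)) → (∀ i k, 0 ≤ f i k) →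
    HasSum (fun g : ∀ i, κ i => ∏ i, f i (g i)) (∏ i, a i)
  have key : P ι := by
    refine Finite.induction_empty_option (P := P) ?_ ?_ ?_ ι
    · intro α β e ih _ κ f a hf hnn
      have : Fintype α := Fintype.ofEquiv β e.symm
      have h := ih (κ := fun i => κ (e i)) (f := fun i => f (e i)) (a := fun i => a (e i))
        (fun i => hf _) (fun i => hnn _)
      rw [← (Equiv.piCongrLeft κ e).hasSum_iff]
      convert h using 1
      · funext g
        exact (Fintype.prod_equiv e _ _ fun i => by simp [Equiv.piCongrLeft_apply_apply]).symm
      · exact (Fintype.prod_equiv e _ _ fun i => rfl).symm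
    · intro _ κ f a _ _
      simp
    · intro α _ ih hopt κ f a hf hnn
      obtain rfl : hopt = instFintypeOption := Subsingleton.elim _ _
      have htail := ih (fun i => hf (some i)) (fun i => hnn (some i))
      have hprod := (hf none).summable.mul_of_nonneg htail.summable (hnn none)
        fun g => Finset.prod_nonneg fun i _ => hnn _ _
      have h := (hf none).mul htail hprod
      rw [Fintype.prod_option, ← (Equiv.piOptionEquivProd).symm.hasSum_iff]
      refine h.congr_fun fun p => ?_
      show ∏ i, f i (Equiv.piOptionEquivProd.symm p i) = _
      rw [Fintype.prod_option]
      rfl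
  exact key hf hnn

noncomputable def Int.natEquivGt (c : ℝ) : ℕ ≃ {s : ℤ // c < s} where
  toFun t := ⟨⌊c⌋ + 1 + t, by push_cast; linarith [Int.lt_floor_add_one c, t.cast_nonneg (α := ℝ)]⟩
  invFun s := (s.1 - (⌊c⌋ + 1)).toNat
  left_inv t := by simp
  right_inv s := by
    have := Int.floor_lt.mpr s.2
    ext
    simp only
    omega

theorem hasSum_zpow_neg_gt {u : ℝ} (hu : 1 < u) (c : ℝ) :
    HasSum (fun s : {s : ℤ // c < s} => u ^ (-(s : ℤ))) (u ^ (-⌊c⌋) / (u - 1)) := by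
  have hu0 : u ≠ 0 := by positivity
  have hgeom := (hasSum_geometric_of_lt_one (inv_nonneg.mpr (by positivity))
    (inv_lt_one_of_one_lt₀ hu)).mul_left (u ^ (-⌊c⌋) * u⁻¹)
  have hval : u ^ (-⌊c⌋) * u⁻¹ * (1 - u⁻¹)⁻¹ = u ^ (-⌊c⌋) / (u - 1) := by
    have : u - 1 ≠ 0 := by linarith
    field_simp
  rw [← (Int.natEquivGt c).hasSum_iff, ← hval]
  refine hgeom.congr_fun fun t => ?_
  change u ^ (-(⌊c⌋ + 1 + (t : ℤ))) = _
  rw [show -(⌊c⌋ + 1 + (t : ℤ)) = -⌊c⌋ + -1 + -(t : ℤ) by ring, zpow_add₀ hu0, zpow_add₀ hu0,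
    zpow_neg_one, zpow_neg u (t : ℤ), zpow_natCast, inv_pow]

theorem hasSum_prod_zpow_neg_gt {ι : Type*} [Fintype ι] {u : ι → ℝ} (hu : ∀ i, 1 < u i)
    (c : ι → ℝ) :
    HasSum (fun s : {s : ι → ℤ // ∀ i, c i < s i} => ∏ i, u i ^ (-s.1 i))
      (∏ i, u i ^ (-⌊c i⌋) / (u i - 1)) := by
  rw [← (Equiv.subtypePiEquivPi (β := fun _ : ι => ℤ) (p := fun i s => c i < s)).symm.hasSum_iff]
  exact (HasSum.pi_prod_of_nonneg (fun i => hasSum_zpow_neg_gt (hu i) (c i))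
    fun i s => (zpow_pos (by linarith [hu i]) _).le).congr_fun fun s => rfl

theorem Finset.sum_Ico_add_pred_mul_sum_Ico {R : Type*} [CommRing R] (f : ℕ → R) (n : ℕ) :
    ∑ i ∈ Ico 1 n, (f i + f (i - 1)) * ∑ k ∈ Ico i n, f k
      = (∑ k ∈ range n, f k) * ∑ k ∈ Ico 1 n, f k := by
  rcases Nat.eq_zero_or_pos n with rfl | hn
  · simp
  set S : ℕ → R := fun j => ∑ k ∈ Ico j n, f k
  have hS : ∀ j < n, S j = f j + S (j + 1) := fun j hj => sum_eq_sum_Ico_succ_bot hj f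
  set g : ℕ → R := fun j => -(S (j - 1) * S j)
  have hterm : ∀ i ∈ Ico 1 n, (f i + f (i - 1)) * S i = g (i + 1) - g i := by
    intro i hi
    obtain ⟨h1, h2⟩ := mem_Ico.mp hi
    have := hS (i - 1) (by omega)
    rw [Nat.sub_add_cancel h1] at this
    simp only [g, Nat.add_sub_cancel, this, hS i h2]
    ring
  rw [sum_congr rfl hterm, sum_Ico_sub g hn]
  simp only [g, S, Ico_self, sum_empty, mul_zero, Nat.sub_self, range_eq_Ico]
  ring

theorem Finset.sum_Ico_add_pred_mul_tail_ratio {K : Type*} [Field K] (f : ℕ → K) {n : ℕ}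
    (hS : ∑ k ∈ range n, f k ≠ 0) (a : K) :
    ∑ i ∈ Ico 1 n, (f i + f (i - 1)) * (a / (∑ k ∈ range n, f k) * ∑ k ∈ Ico i n, f k)
      = a * (∑ k ∈ range n, f k - f 0) := by
  have hn : 0 < n := Nat.pos_of_ne_zero fun h => hS (by simp [h])
  have htail : ∑ k ∈ Ico 1 n, f k = ∑ k ∈ range n, f k - f 0 := by
    rw [sum_range_eq_add_Ico f hn]
    ring
  simp_rw [mul_left_comm _ (a / _), ← mul_sum, sum_Ico_add_pred_mul_sum_Ico, htail]
  field_simp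

theorem Real.pow_zpow_neg_floor_div {y : ℝ} (hy : 0 < y) (n : ℕ) (c : ℝ) :
    (y ^ n) ^ (-⌊c⌋) / (y ^ n - 1) = y ^ (-(n * c)) * -(y ^ (n * Int.fract c) / (1 - y ^ n)) := by
  rw [← neg_sub, div_neg, ← Real.rpow_natCast, ← Real.rpow_intCast, ← Real.rpow_mul hy.le,
    mul_neg, ← neg_div, ← mul_div_assoc, ← Real.rpow_add hy, Int.fract]
  push_cast
  ring_nf

theorem zpow_sum₀ {ι G₀ : Type*} [CommGroupWithZero G₀] {a : G₀} (ha : a ≠ 0) (s : Finset ι)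
    (f : ι → ℤ) : a ^ (∑ i ∈ s, f i) = ∏ i ∈ s, a ^ f i := by
  classical
  induction s using Finset.induction with
  | empty => simp
  | insert i s hi ih => rw [sum_insert hi, prod_insert hi, zpow_add₀ ha, ih]

/-- Indices are shifted by one: the parts are `r 0, …, r (ℓ - 1)` and the paper's
`i ∈ {2, …, ℓ}` is `i ∈ Finset.Ico 1 ℓ`. -/
theorem stmt14 (ℓ : ℕ) (hℓ : 2 ≤ ℓ) (r : ℕ → ℕ) (hr : ∀ i < ℓ, 0 < r i) (α : ℤ)
    (y : ℝ) (hy : 1 < y) :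
    let R : ℕ := ∑ i ∈ Finset.range ℓ, r i
    let m : ℕ → ℕ := fun i => r i + r (i - 1)
    let c : ℕ → ℝ := fun i => (α : ℝ) / (R : ℝ) * ∑ k ∈ Finset.Ico i ℓ, (r k : ℝ)
    let T := { s : (Finset.Ico 1 ℓ : Finset ℕ) → ℤ //
      ∀ i : (Finset.Ico 1 ℓ : Finset ℕ), c i.1 < (s i : ℝ) }
    let F : T → ℝ := fun s =>
      y ^ (2 * α * ((R : ℤ) - (r 0 : ℤ))
        - 2 * ∑ i : (Finset.Ico 1 ℓ : Finset ℕ), (m i.1 : ℤ) * s.1 i)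
    (Summable fun s : T => |F s|) ∧
      (∑' s : T, F s) = (-1 : ℝ) ^ (ℓ - 1) *
        ∏ i ∈ Finset.Ico 1 ℓ, y ^ (2 * (m i : ℝ) * Int.fract (c i)) / (1 - y ^ (2 * m i)) := by
  intro R m c T F
  have hy0 : 0 < y := by linarith
  have hu : ∀ i : Ico 1 ℓ, 1 < y ^ (2 * m i) := fun i => by
    have := hr i (mem_Ico.mp i.2).2
    exact one_lt_pow₀ hy (by simp only [m]; omega)
  set C : ℝ := y ^ (2 * α * ((R : ℤ) - (r 0 : ℤ)))
  have hF : ∀ s : T, F s = C * ∏ i : Ico 1 ℓ, (y ^ (2 * m i)) ^ (-s.1 i) := fun s => by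
    simp only [F, C, sub_eq_add_neg, zpow_add₀ hy0.ne', mul_sum, ← sum_neg_distrib,
      zpow_sum₀ hy0.ne', ← zpow_natCast, ← zpow_mul]
    push_cast
    ring_nf
  have hsum : HasSum F (C * ∏ i : Ico 1 ℓ, (y ^ (2 * m i)) ^ (-⌊c i⌋) / (y ^ (2 * m i) - 1)) :=
    ((hasSum_prod_zpow_neg_gt hu _).mul_left C).congr_fun hF
  have hR : ∑ k ∈ range ℓ, (r k : ℝ) ≠ 0 := by
    exact_mod_cast (sum_pos (fun i hi => hr i (mem_range.mp hi)) ⟨0, mem_range.mpr (by omega)⟩).ne'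
  have hexp : ∑ i ∈ Ico 1 ℓ, ((2 * m i : ℕ) : ℝ) * c i = ((2 * α * ((R : ℤ) - r 0) : ℤ) : ℝ) := by
    have h := sum_Ico_add_pred_mul_tail_ratio (fun k => (r k : ℝ)) hR (2 * α)
    simp only [m, c, R]
    push_cast at h ⊢
    rw [← h]
    exact sum_congr rfl fun i _ => by ring
  refine ⟨hsum.summable.congr fun s => (abs_of_pos (zpow_pos hy0 _)).symm, ?_⟩
  rw [hsum.tsum_eq,
    prod_coe_sort (Ico 1 ℓ) fun i => (y ^ (2 * m i)) ^ (-⌊c i⌋) / (y ^ (2 * m i) - 1),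
    prod_congr rfl fun i _ => Real.pow_zpow_neg_floor_div hy0 (2 * m i) (c i), prod_mul_distrib,
    prod_neg, Nat.card_Ico, ← Real.rpow_sum_of_pos hy0, sum_neg_distrib, hexp, Real.rpow_neg hy0.le,
    Real.rpow_intCast, ← mul_assoc, mul_inv_cancel₀ (zpow_pos hy0 _).ne', one_mul]
  push_cast
  rfl
end
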